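/- Let A be a C*-algebra and n ∈ ℕ. Then the Pedersen ideal of the matrix algebra M_n(A) equals the algebraic tensor product Ped(A) ⊗_alg M_n, i.e., Ped(M_n(A)) = M_n(Ped(A)) consists exactly of the n×n matrices all of whose entries lie in Ped(A). -/

import Mathlib

open Filter Topology Set
open scoped ENNReal NNReal

noncomputable section


section Weak
variable {R : Type*} [NonUnitalRing R] [Module ℂ R] [TopologicalSpace R]

/-- A (not necessarily closed) two-sided algebraic ideal. -/
def IsAlgIdeal (I : Set R) : Prop :=
  (0 : R) ∈ I ∧ (∀ a ∈ I, ∀ b ∈ I, a + b ∈ I) ∧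
  (∀ c : ℂ, ∀ a ∈ I, c • a ∈ I) ∧
  (∀ x : R, ∀ a ∈ I, x * a ∈ I ∧ a * x ∈ I)

variable (R) in
/-- A C*-algebra is simple if it is nonzero and has no nontrivial closed two-sided ideals. -/
def IsSimpleCStarAlgebra : Prop :=
  (∃ a : R, a ≠ 0) ∧
  ∀ I : Set R, IsClosed I → IsAlgIdeal I → I = {0} ∨ I = Set.univ

/-- The Pedersen ideal: the minimal dense two-sided (algebraic) ideal. -/
def IsPedersenIdeal (I : Set R) : Prop :=
  IsAlgIdeal I ∧ Dense I ∧ ∀ J : Set R, IsAlgIdeal J → Dense J → I ⊆ J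

/-- Algebraic simplicity of a subalgebra given as a subset: no nonzero proper
two-sided algebraic ideals. -/
def IsAlgebraicallySimpleSet (B : Set R) : Prop :=
  (∃ b ∈ B, b ≠ 0) ∧
  ∀ I : Set R, I ⊆ B →
    ((0:R) ∈ I ∧ (∀ a ∈ I, ∀ b ∈ I, a + b ∈ I) ∧ (∀ c : ℂ, ∀ a ∈ I, c • a ∈ I) ∧
      (∀ x ∈ B, ∀ a ∈ I, x * a ∈ I ∧ a * x ∈ I)) →
    I = {0} ∨ I = B

end Weak

section Basic
variable {A : Type*} [NonUnitalCStarAlgebra A] [PartialOrder A] [StarOrderedRing A]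

/-- The absolute value `|a| = (a*a)^{1/2}` in a C*-algebra. -/
noncomputable def cAbs (a : A) : A := CFC.sqrt (star a * a)

/-- The cut-down `(a - ε)₊` by continuous functional calculus. -/
noncomputable def cut (a : A) (ε : ℝ) : A := cfcₙ (fun t : ℝ => max (t - ε) 0) a

/-- Cuntz subequivalence: `a ≾ b` iff `a = lim xₙ b xₙ*`. -/
def CuntzSub (a b : A) : Prop :=
  ∃ x : ℕ → A, Tendsto (fun n => x n * b * star (x n)) atTop (nhds a)

def CuntzEquiv (a b : A) : Prop := CuntzSub a b ∧ CuntzSub b a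

def IsStrictlyPositiveElem (h : A) : Prop :=
  0 ≤ h ∧ Dense {y : A | ∃ a : A, y = h * a}

variable (A) in
def IsSigmaUnital : Prop := ∃ h : A, IsStrictlyPositiveElem h

def IsHereditarySet (B : Set A) : Prop :=
  ∀ a b : A, 0 ≤ a → a ≤ b → b ∈ B → a ∈ B

/-- The hereditary subalgebra `her(x) = closure (x* A x)` generated by `x` (as a set). -/
def herSet (x : A) : Set A := closure {y : A | ∃ a : A, y = star x * a * x}

/-- The Hilbert `A`-module `E_x = closure (x A)`, as a subset of `A`. -/
def Ex (x : A) : Set A := closure {y : A | ∃ a : A, y = x * a}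

/-- An isomorphism of Hilbert `A`-submodules of `A`: a bijection which is additive,
right `A`-linear and preserves the `A`-valued inner product `⟨u, v⟩ = u* v`. -/
def HilbertModuleIso (X Y : Set A) : Prop :=
  ∃ Φ : A → A, Set.BijOn Φ X Y ∧
    (∀ u ∈ X, ∀ v ∈ X, Φ (u + v) = Φ u + Φ v) ∧
    (∀ u ∈ X, ∀ a : A, u * a ∈ X → Φ (u * a) = Φ u * a) ∧
    (∀ u ∈ X, ∀ v ∈ X, star (Φ u) * Φ v = star u * v)

/-- Compact containment of Hilbert submodules of `A`: `X ⋐ Y` iff `X ⊆ Y` and there is a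
self-adjoint "compact endomorphism" of `Y` (an element of `closure (span {u v* : u, v ∈ Y})`,
acting by left multiplication) which is the identity on `X`. -/
def HMCompactlyContained (X Y : Set A) : Prop :=
  X ⊆ Y ∧ ∃ e ∈ closure (Submodule.span ℂ {z : A | ∃ u ∈ Y, ∃ v ∈ Y, z = u * star v} : Set A),
    star e = e ∧ ∀ u ∈ X, e * u = u

end Basic

/-- The canonical top-left-corner inclusion of matrix algebras. -/
def matIncl {A : Type*} [Zero A] {n : ℕ} (x : Matrix (Fin n) (Fin n) A) :
    Matrix (Fin (n+1)) (Fin (n+1)) A :=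
  Matrix.of fun i j => if h : (i : ℕ) < n ∧ (j : ℕ) < n then x ⟨i, h.1⟩ ⟨j, h.2⟩ else 0

/-- A stabilization of `A`, i.e. a realization of `A ⊗ K`: a C*-algebra containing
compatibly all the matrix algebras `Mₙ(A)`, with dense union. -/
structure Stabilization.{u, v} (A : Type u) [NonUnitalCStarAlgebra A] : Type (max u (v + 1)) where
  SA : Type v
  [instSA : NonUnitalCStarAlgebra SA]
  [instPO : PartialOrder SA]
  [instSOR : StarOrderedRing SA]
  ι : ∀ n : ℕ, Matrix (Fin n) (Fin n) A →⋆ₙₐ[ℂ] SA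
  ι_injective : ∀ n, Function.Injective (ι n)
  ι_compat : ∀ (n : ℕ) (x : Matrix (Fin n) (Fin n) A), ι (n+1) (matIncl x) = ι n x
  dense_range : Dense (⋃ n, Set.range (ι n))

attribute [instance] Stabilization.instSA Stabilization.instPO Stabilization.instSOR

/-- The canonical inclusion `A → A ⊗ K` (as the `1 × 1` corner). -/
def Stabilization.toSA {A : Type*} [NonUnitalCStarAlgebra A] (St : Stabilization A) (a : A) :
    St.SA :=
  St.ι 1 (Matrix.of fun _ _ => a)

/-- A C*-algebra is stable if it is isomorphic to its stabilization `A ⊗ K`. -/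
def IsStable.{u} (A : Type u) [NonUnitalCStarAlgebra A] : Prop :=
  ∃ St : Stabilization.{u, u} A, Nonempty (A ≃⋆ₐ[ℂ] St.SA)

/-- The Cuntz semigroup `Cu(A)`: Cuntz classes of positive elements of `A ⊗ K`,
with order induced by Cuntz subequivalence and addition by orthogonal sum. -/
structure CuntzSemigroup {A : Type*} [NonUnitalCStarAlgebra A] (St : Stabilization A) where
  S : Type*
  [instMon : AddCommMonoid S]
  [instPO : PartialOrder S]
  cls : St.SA → S
  cls_zero : cls 0 = 0
  cls_le_iff : ∀ a b : St.SA, 0 ≤ a → 0 ≤ b → (cls a ≤ cls b ↔ CuntzSub a b)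
  cls_surjective : ∀ s : S, ∃ a : St.SA, 0 ≤ a ∧ cls a = s
  cls_add_orth : ∀ a b : St.SA, 0 ≤ a → 0 ≤ b → a * b = 0 → cls (a + b) = cls a + cls b
  add_le_add : ∀ s t u : S, s ≤ t → u + s ≤ u + t
  zero_le : ∀ s : S, 0 ≤ s
  exists_sup : ∀ f : ℕ → S, Monotone f → ∃ s : S, IsLUB (Set.range f) s

attribute [instance] CuntzSemigroup.instMon CuntzSemigroup.instPO

namespace CuntzSemigroup

variable {A : Type*} [NonUnitalCStarAlgebra A] {St : Stabilization A} (C : CuntzSemigroup St)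

/-- The Cuntz class `[|a|]` of an element `a ∈ A ⊆ A ⊗ K`. -/
def clsOf [PartialOrder A] [StarOrderedRing A] (a : A) : C.S := C.cls (St.toSA (cAbs a))

/-- The way-below (compact containment) relation `s ≪ t`. -/
def WayBelow (s t : C.S) : Prop :=
  ∀ f : ℕ → C.S, Monotone f → ∀ u : C.S, IsLUB (Set.range f) u → t ≤ u → ∃ k, s ≤ f k

def IsCompactElem (s : C.S) : Prop := C.WayBelow s s

def IsSoft (s : C.S) : Prop := ∀ t : C.S, C.WayBelow t s → ∃ n : ℕ, (n + 1) • t ≤ n • s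

def AlmostUnperforated : Prop := ∀ s t : C.S, ∀ n : ℕ, (n + 1) • s ≤ n • t → s ≤ t

def IsFiniteElem (s : C.S) : Prop := ∀ t : C.S, s + t = s → t = 0

def IsInfiniteElem (s : C.S) : Prop := ∃ t : C.S, t ≠ 0 ∧ s + t = s

/-- A functional on the Cuntz semigroup. -/
def IsFunctional (lam : C.S → ℝ≥0∞) : Prop :=
  lam 0 = 0 ∧ (∀ s t : C.S, lam (s + t) = lam s + lam t) ∧
  (∀ s t : C.S, s ≤ t → lam s ≤ lam t) ∧
  (∀ (f : ℕ → C.S) (s : C.S), Monotone f → IsLUB (Set.range f) s → lam s = ⨆ n, lam (f n))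

/-- A functional is trivial if it only takes the values `0` and `∞`. -/
def TrivialFunctional (lam : C.S → ℝ≥0∞) : Prop := ∀ s : C.S, lam s = 0 ∨ lam s = ∞

/-- `Cu(A)` admits a unique nontrivial functional, up to a (finite positive) scalar. -/
def UniqueFunctional : Prop :=
  ∃ lam : C.S → ℝ≥0∞, C.IsFunctional lam ∧ ¬ C.TrivialFunctional lam ∧
    ∀ lam' : C.S → ℝ≥0∞, C.IsFunctional lam' → ¬ C.TrivialFunctional lam' →
      ∃ c : ℝ≥0∞, 0 < c ∧ c ≠ ∞ ∧ ∀ s : C.S, lam' s = c * lam s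

end CuntzSemigroup

section QT

variable {A : Type*} [NonUnitalCStarAlgebra A] (St : Stabilization A)

/-- A 2-quasitrace on `A`: defined on `(A ⊗ K)₊`, vanishing at `0`, additive on commuting
positive elements, positively homogeneous, and satisfying the trace identity. -/
def IsQuasitrace (τ : St.SA → ℝ≥0∞) : Prop :=
  τ 0 = 0 ∧
  (∀ a b : St.SA, 0 ≤ a → 0 ≤ b → a * b = b * a → τ (a + b) = τ a + τ b) ∧
  (∀ (c : ℝ≥0) (a : St.SA), 0 ≤ a → τ ((c : ℂ) • a) = (c : ℝ≥0∞) * τ a) ∧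
  (∀ x : St.SA, τ (star x * x) = τ (x * star x))

def IsLscQuasitrace (τ : St.SA → ℝ≥0∞) : Prop :=
  IsQuasitrace St τ ∧ LowerSemicontinuousOn τ {a : St.SA | 0 ≤ a}

/-- A quasitrace is nontrivial if it takes a value in `(0, ∞)`. -/
def NontrivialQT (τ : St.SA → ℝ≥0∞) : Prop := ∃ a : St.SA, 0 ≤ a ∧ τ a ≠ 0 ∧ τ a ≠ ∞

/-- `A` admits a unique nontrivial lower semicontinuous 2-quasitrace, up to scalar. -/
def UniqueQuasitrace : Prop :=
  ∃ τ : St.SA → ℝ≥0∞, IsLscQuasitrace St τ ∧ NontrivialQT St τ ∧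
    ∀ τ' : St.SA → ℝ≥0∞, IsLscQuasitrace St τ' → NontrivialQT St τ' →
      ∃ c : ℝ≥0∞, 0 < c ∧ c ≠ ∞ ∧ ∀ a : St.SA, 0 ≤ a → τ' a = c * τ a

/-- `τ` is the 2-quasitrace associated to the functional `lam` under the bijection
`QT₂(A) ≅ F(Cu(A))`, i.e. `τ(a) = ∫₀^∞ lam([(a-t)₊]) dt`. -/
def Corresponds (C : CuntzSemigroup St) (τ : St.SA → ℝ≥0∞) (lam : C.S → ℝ≥0∞) : Prop :=
  ∀ a : St.SA, 0 ≤ a → τ a = ∫⁻ t in Set.Ioi (0 : ℝ), lam (C.cls (cut a t))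

end QT

section ASR1

variable {A : Type*} [NonUnitalCStarAlgebra A]

instance instCStarRingSubalg (B : NonUnitalStarSubalgebra ℂ A) : CStarRing B where
  norm_mul_self_le x := by
    simpa using CStarRing.norm_mul_self_le (x : A)

variable (A) in
/-- Almost stable rank one: every hereditary C*-subalgebra `B` satisfies
`B ⊆ closure (GL(B̃))`. -/
def AlmostStableRankOne [PartialOrder A] [StarOrderedRing A] : Prop :=
  ∀ B : NonUnitalStarSubalgebra ℂ A, IsClosed (B : Set A) → IsHereditarySet (B : Set A) →
    ∀ b : B, (b : Unitization ℂ B) ∈ closure {u : Unitization ℂ B | IsUnit u}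

end ASR1

section Her

variable {A : Type*} [NonUnitalCStarAlgebra A]

instance instCStarRingSubalgHer (B : NonUnitalStarSubalgebra ℂ A) : CStarRing B where
  norm_mul_self_le x := by simpa using CStarRing.norm_mul_self_le (x : A)

/-- The (pre-)hereditary subalgebra `x* A x`. -/
def herAlg₀ (x : A) : NonUnitalStarSubalgebra ℂ A where
  carrier := {y : A | ∃ a : A, y = star x * a * x}
  add_mem' := by rintro a b ⟨u, rfl⟩ ⟨v, rfl⟩; exact ⟨u + v, by noncomm_ring⟩
  zero_mem' := ⟨0, by simp⟩
  mul_mem' := by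
    rintro a b ⟨u, rfl⟩ ⟨v, rfl⟩
    exact ⟨u * (x * (star x * v)), by noncomm_ring⟩
  smul_mem' := by
    rintro c a ⟨u, rfl⟩
    exact ⟨c • u, by simp [mul_smul_comm, smul_mul_assoc]⟩
  star_mem' := by
    rintro a ⟨u, rfl⟩
    exact ⟨star u, by simp [star_mul, mul_assoc]⟩

/-- The hereditary C*-subalgebra `her(x) = closure (x* A x)`. -/
def herAlg (x : A) : NonUnitalStarSubalgebra ℂ A := (herAlg₀ x).topologicalClosure

instance (x : A) : CompleteSpace (herAlg x) :=
  (NonUnitalStarSubalgebra.isClosed_topologicalClosure _).completeSpace_coe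

noncomputable instance (x : A) : NonUnitalCStarAlgebra (herAlg x) := {}

end Her

universe u
variable {A : Type u} [NonUnitalCStarAlgebra A] [PartialOrder A] [StarOrderedRing A]

/-!
`Mₙ(Ped A)` is a dense ideal of `Mₙ(A)`, so minimality gives `Ped(Mₙ A) ⊆ Mₙ(Ped A)`.
Conversely, the `a ∈ A` whose matrix units `a ⊗ eₖₗ` all lie in `Ped(Mₙ A)` form an ideal `K`
of `A`. Since `(u ⊗ eₖᵢ) y (v ⊗ eⱼₗ) = u yᵢⱼ v ⊗ eₖₗ`, `K` contains `u e v` for every entry `e` of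
an element of `Ped(Mₙ A)`; these entries are dense, so the closure of `K` contains all products
`u b v`, in particular every positive `p = t (t t) t` with `t = p^{1/4}`, and positive elements
span `A`. Thus `K` is dense, so `Ped A ⊆ K`, and `Mₙ(Ped A) ⊆ Ped(Mₙ A)`.
-/

namespace IsAlgIdeal

variable {R : Type*} [NonUnitalRing R] [Module ℂ R] {I : Set R}

def toSubmodule (hI : IsAlgIdeal I) : Submodule ℂ R where
  carrier := I
  add_mem' ha hb := hI.2.1 _ ha _ hb
  zero_mem' := hI.1
  smul_mem' := hI.2.2.1

lemma mul_mem_left (hI : IsAlgIdeal I) (x : R) {a : R} (ha : a ∈ I) : x * a ∈ I :=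
  (hI.2.2.2 x a ha).1

lemma mul_mem_right (hI : IsAlgIdeal I) (x : R) {a : R} (ha : a ∈ I) : a * x ∈ I :=
  (hI.2.2.2 x a ha).2

lemma sum_mem (hI : IsAlgIdeal I) {κ : Type*} {s : Finset κ} {f : κ → R}
    (hf : ∀ k ∈ s, f k ∈ I) : ∑ k ∈ s, f k ∈ I :=
  Submodule.sum_mem hI.toSubmodule hf

variable {ι : Type*} [Fintype ι]

lemma matrix (hI : IsAlgIdeal I) : IsAlgIdeal {x : Matrix ι ι R | ∀ i j, x i j ∈ I} := by
  refine ⟨fun i j => hI.1, fun a ha b hb i j => hI.2.1 _ (ha i j) _ (hb i j),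
    fun c a ha i j => hI.2.2.1 c _ (ha i j), fun x a ha => ⟨fun i j => ?_, fun i j => ?_⟩⟩
  · exact hI.sum_mem fun k _ => hI.mul_mem_left _ (ha k j)
  · exact hI.sum_mem fun k _ => hI.mul_mem_right _ (ha i k)

lemma setOf_single_mem [DecidableEq ι] {P : Set (Matrix ι ι R)} (hP : IsAlgIdeal P) :
    IsAlgIdeal {a : R | ∀ k l, Matrix.single k l a ∈ P} := by
  refine ⟨fun k l => by simpa using hP.1, fun a ha b hb k l => ?_, fun c a ha k l => ?_,
    fun x a ha => ⟨fun k l => ?_, fun k l => ?_⟩⟩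
  · simpa [Matrix.single_add] using hP.2.1 _ (ha k l) _ (hb k l)
  · simpa [Matrix.smul_single] using hP.2.2.1 c _ (ha k l)
  · simpa using hP.mul_mem_left (Matrix.single k k x) (ha k l)
  · simpa using hP.mul_mem_right (Matrix.single l l x) (ha k l)

lemma mem_of_forall_single_mem [DecidableEq ι] {P : Set (Matrix ι ι R)} (hP : IsAlgIdeal P)
    {x : Matrix ι ι R} (hx : ∀ i j, Matrix.single i j (x i j) ∈ P) : x ∈ P := by
  rw [Matrix.matrix_eq_sum_single x]
  exact hP.sum_mem fun i _ => hP.sum_mem fun j _ => hx i j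

end IsAlgIdeal

lemma Dense.matrix {R : Type*} [TopologicalSpace R] {ι : Type*} {I : Set R} (hI : Dense I) :
    Dense {x : Matrix ι ι R | ∀ i j, x i j ∈ I} := by
  have h := dense_pi (Set.univ : Set ι) fun _ _ => dense_pi (Set.univ : Set ι) fun _ _ => hI
  simp only [Set.pi, Set.mem_univ, forall_const] at h
  exact h

lemma CStarAlgebra.dense_of_mul_mul_mem (K : Submodule ℂ A) {E : Set A} (hE : Dense E)
    (hK : ∀ u v, ∀ e ∈ E, u * e * v ∈ K) : Dense (K : Set A) := by
  have hprod : ∀ u b v : A, u * b * v ∈ K.topologicalClosure := fun u b v =>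
    map_mem_closure (f := fun e => u * e * v) (by fun_prop) (hE b) (hK u v)
  refine Submodule.dense_iff_topologicalClosure_eq_top.mpr ?_
  rw [eq_top_iff, ← CStarAlgebra.span_nonneg, Submodule.span_le]
  intro p hp
  set t := CFC.sqrt (CFC.sqrt p)
  have hp_eq : t * (t * t) * t = p := by
    rw [← mul_assoc, CFC.sqrt_mul_sqrt_self _ (CFC.sqrt_nonneg _),
      mul_assoc, CFC.sqrt_mul_sqrt_self _ (CFC.sqrt_nonneg _), CFC.sqrt_mul_sqrt_self p hp]
  rw [SetLike.mem_coe, ← hp_eq]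
  exact hprod _ _ _

lemma dense_setOf_single_mem {ι : Type*} [Fintype ι] [DecidableEq ι]
    {P : Set (Matrix ι ι A)} (hP : IsAlgIdeal P) (hPd : Dense P) :
    Dense {a : A | ∀ k l, Matrix.single k l a ∈ P} := by
  rcases isEmpty_or_nonempty ι with _ | ⟨⟨i⟩⟩
  · simp [dense_univ]
  have hentries : Dense ((fun y : Matrix ι ι A => y i i) '' P) :=
    (Function.Surjective.denseRange fun a => ⟨Matrix.single i i a, by simp⟩).dense_image
      (by fun_prop) hPd
  refine CStarAlgebra.dense_of_mul_mul_mem hP.setOf_single_mem.toSubmodule hentries ?_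
  rintro u v _ ⟨y, hy, rfl⟩ k l
  rw [← Matrix.single_mul_mul_single]
  exact hP.mul_mem_right _ (hP.mul_mem_left _ hy)

/-- `Ped(Mₙ(A)) = Mₙ(Ped(A))`. -/
theorem pedersen_ideal_matrix (n : ℕ) (I : Set A) (hI : IsPedersenIdeal I)
    (P : Set (Matrix (Fin n) (Fin n) A)) (hP : IsPedersenIdeal P) :
    P = {x : Matrix (Fin n) (Fin n) A | ∀ i j, x i j ∈ I} := by
  obtain ⟨hPideal, hPdense, hPmin⟩ := hP
  obtain ⟨hIideal, hIdense, hImin⟩ := hI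
  have hIK : I ⊆ {a : A | ∀ k l, Matrix.single k l a ∈ P} :=
    hImin _ hPideal.setOf_single_mem (dense_setOf_single_mem hPideal hPdense)
  exact (hPmin _ hIideal.matrix hIdense.matrix).antisymm fun x hx =>
    hPideal.mem_of_forall_single_mem fun i j => hIK (hx i j) i j
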